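/- If an ordered pair (I,J) of disjoint subsets of {1,…,n} with |I|+|J| = k is self-dual and satisfies t_{(I,J)} ≥ 0, then |I| ≥ |J|, i.e. 𝕚 ≥ 𝕛. -/

import Mathlib

noncomputable section

open Finset

/-- The `i`-th standard basis vector `ε_i` of `ℝ^n` (0-indexed: `eps n i` is `ε_{i+1}`). -/
def eps (n : ℕ) (i : Fin n) : Fin n → ℝ := fun m => if m = i then 1 else 0

/-- The positive roots of type `B_n`: `ε_i - ε_j` and `ε_i + ε_j` for `i < j`, and all `ε_i`. -/
def PosRoot (n : ℕ) : Set (Fin n → ℝ) :=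
  {v | (∃ i j : Fin n, i < j ∧ (v = eps n i - eps n j ∨ v = eps n i + eps n j)) ∨
       (∃ i : Fin n, v = eps n i)}

/-- The negative roots of type `B_n`. -/
def NegRoot (n : ℕ) : Set (Fin n → ℝ) := {v | -v ∈ PosRoot n}

/-- The simple roots: `simpleRoot n l` is `α_{l+1}`, i.e. `ε_{l+1} - ε_{l+2}` if `l+1 < n`
and `ε_n` for the last one. -/
def simpleRoot (n : ℕ) (l : Fin n) : Fin n → ℝ :=
  if h : (l : ℕ) + 1 < n then eps n l - eps n ⟨(l : ℕ) + 1, h⟩ else eps n l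

/-- The number of elements of `S` smaller than `x` (the 0-based rank of `x` in `S`). -/
def rk {n : ℕ} (S : Finset (Fin n)) (x : Fin n) : ℕ := (S.filter (fun y => y < x)).card

/-- The `l`-th element (0-indexed) of `S` in increasing order. -/
def elt {n : ℕ} (S : Finset (Fin n)) (l : ℕ) (h : l < S.card) : Fin n :=
  (S.orderIsoOfFin rfl ⟨l, h⟩).1

/-- The sign `η_x` attached to the pair `(I, J)`: `-1` on `I` and `1` elsewhere. -/
def sgn {n : ℕ} (I : Finset (Fin n)) (x : Fin n) : ℝ := if x ∈ I then -1 else 1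

/-- The 0-based index of the coordinate to which `w_{(I,J)}` sends the `x`-th coordinate:
`i_l ↦ k+1-l`, `j_l ↦ l`, `r_l ↦ k+l` (in the 1-based numbering of the paper). -/
def tgt {n : ℕ} (k : ℕ) (I J : Finset (Fin n)) (x : Fin n) : ℕ :=
  if x ∈ I then k - 1 - rk I x
  else if x ∈ J then rk J x
  else k + rk ((I ∪ J)ᶜ) x

/-- The Kostant representative `w_{(I,J)}` as a linear map on `ℝ^n`, determined by
`w(ε_{i_l}) = -ε_{k+1-l}`, `w(ε_{j_l}) = ε_l`, `w(ε_{r_l}) = ε_{k+l}`. -/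
def wIJ {n : ℕ} (k : ℕ) (I J : Finset (Fin n)) (v : Fin n → ℝ) : Fin n → ℝ :=
  fun m => ∑ x : Fin n, (if tgt k I J x = (m : ℕ) then sgn I x * v x else 0)

/-- The inverse of `w_{(I,J)}`. -/
def wIJinv {n : ℕ} (k : ℕ) (I J : Finset (Fin n)) (v : Fin n → ℝ) : Fin n → ℝ :=
  fun x => sgn I x * ∑ m : Fin n, (if tgt k I J x = (m : ℕ) then v m else 0)

/-- The Weyl group of type `B_n`, realized as the group of linear automorphisms permuting
the basis vectors up to signs. -/
def WeylB (n : ℕ) : Set ((Fin n → ℝ) ≃ₗ[ℝ] (Fin n → ℝ)) :=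
  {w | ∃ (σ : Equiv.Perm (Fin n)) (η : Fin n → ℝ),
    (∀ i, η i = 1 ∨ η i = -1) ∧ ∀ i, w (eps n i) = η i • eps n (σ i)}

/-- The set `W^{P_k}` of Kostant representatives: `w ∈ W` such that `w⁻¹(α_l)` is a
positive root for all `l ≠ k` (1-based `l`). -/
def WP (n k : ℕ) : Set ((Fin n → ℝ) ≃ₗ[ℝ] (Fin n → ℝ)) :=
  {w | w ∈ WeylB n ∧ ∀ l : Fin n, (l : ℕ) + 1 ≠ k → w.symm (simpleRoot n l) ∈ PosRoot n}

/-- The length of `w`: the number of positive roots mapped by `w` to negative roots. -/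
def len {n : ℕ} (w : (Fin n → ℝ) → (Fin n → ℝ)) : ℕ :=
  Set.ncard {β | β ∈ PosRoot n ∧ w β ∈ NegRoot n}

/-- `m = max({l ∈ {1,…,𝕛} : j_l < i for all i ∈ I} ∪ {0})`. -/
def mIJ {n : ℕ} (I J : Finset (Fin n)) : ℕ :=
  (insert 0 ((Finset.Icc 1 J.card).filter
    (fun l => ∃ x ∈ J, rk J x + 1 = l ∧ ∀ i ∈ I, x < i))).max' (insert_nonempty _ _)

/-- `ρ = Σ_i (n - i + 1/2) ε_i` (1-based `i`). -/
def rho (n : ℕ) : Fin n → ℝ := fun i => (n : ℝ) - ((i : ℕ) + 1) + 1 / 2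

/-- The vector `λ + ρ` in `ℝ^n`. -/
def lamRho (n : ℕ) (lam : Fin n → ℤ) : Fin n → ℝ := fun i => (lam i : ℝ) + rho n i

/-- `t_{(I,J)} = Σ_l (λ_{i_l} - i_l) - Σ_l (λ_{j_l} - j_l) + (𝕚 - 𝕛)(n + 1/2)`. -/
def tIJ {n : ℕ} (lam : Fin n → ℤ) (I J : Finset (Fin n)) : ℝ :=
  (∑ l : Fin I.card,
    ((lam (elt I (l : ℕ) l.isLt) : ℝ) - (((elt I (l : ℕ) l.isLt : Fin n) : ℕ) + 1)))
  - (∑ l : Fin J.card,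
    ((lam (elt J (l : ℕ) l.isLt) : ℝ) - (((elt J (l : ℕ) l.isLt : Fin n) : ℕ) + 1)))
  + ((I.card : ℝ) - (J.card : ℝ)) * ((n : ℝ) + 1 / 2)

/-- `c`: the arithmetic mean of the first `k` coordinates of `w_{(I,J)}(λ+ρ) - ρ`. -/
def cIJ {n : ℕ} (k : ℕ) (lam : Fin n → ℤ) (I J : Finset (Fin n)) : ℝ :=
  (∑ m ∈ Finset.univ.filter (fun m : Fin n => (m : ℕ) < k),
    (wIJ k I J (lamRho n lam) m - rho n m)) / (k : ℝ)

/-- `μ_{(I,J)} = w_{(I,J)}(λ+ρ) - ρ - c·(ε_1 + … + ε_k)`. -/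
def muIJ {n : ℕ} (k : ℕ) (lam : Fin n → ℤ) (I J : Finset (Fin n)) : Fin n → ℝ :=
  fun m => wIJ k I J (lamRho n lam) m - rho n m -
    cIJ k lam I J * (∑ i ∈ Finset.univ.filter (fun i : Fin n => (i : ℕ) < k), eps n i) m

/-- `(I,J)` is self-dual: the `l`-th coordinate of `μ_{(I,J)}` is the negative of its
`(k+1-l)`-th coordinate for all `1 ≤ l ≤ k`. -/
def SelfDual {n : ℕ} (k : ℕ) (lam : Fin n → ℤ) (I J : Finset (Fin n)) : Prop :=
  ∀ (l : ℕ) (_ : 1 ≤ l) (_ : l ≤ k) (h1 : l - 1 < n) (h2 : k - l < n),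
    muIJ k lam I J ⟨l - 1, h1⟩ = - muIJ k lam I J ⟨k - l, h2⟩

/-- The set `𝒮_k` of ordered pairs `(I,J)` of disjoint subsets with `|I| + |J| = k`. -/
def SIJ (n k : ℕ) : Set (Finset (Fin n) × Finset (Fin n)) :=
  {p | Disjoint p.1 p.2 ∧ p.1.card + p.2.card = k}


section Aux

variable {n k : ℕ} {I J S : Finset (Fin n)}

lemma elt_mem (S : Finset (Fin n)) (l : ℕ) (h : l < S.card) : elt S l h ∈ S :=
  (S.orderIsoOfFin rfl ⟨l, h⟩).2

lemma rk_lt_card {x : Fin n} (hx : x ∈ S) : rk S x < S.card := by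
  unfold rk
  refine lt_of_le_of_lt (Finset.card_le_card fun y hy => ?_) (Finset.card_erase_lt_of_mem hx)
  rw [Finset.mem_filter] at hy
  exact Finset.mem_erase.2 ⟨ne_of_lt hy.2, hy.1⟩

lemma rk_lt_rk {x y : Fin n} (hx : x ∈ S) (hxy : x < y) : rk S x < rk S y := by
  unfold rk
  apply Finset.card_lt_card
  constructor
  · intro z hz
    rw [Finset.mem_filter] at hz ⊢
    exact ⟨hz.1, lt_trans hz.2 hxy⟩
  · intro hsub
    have := hsub (Finset.mem_filter.2 ⟨hx, hxy⟩)
    rw [Finset.mem_filter] at this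
    exact lt_irrefl x this.2

lemma rk_inj {x y : Fin n} (hx : x ∈ S) (hy : y ∈ S) (h : rk S x = rk S y) : x = y := by
  rcases lt_trichotomy x y with h' | h' | h'
  · exact absurd h (ne_of_lt (rk_lt_rk hx h'))
  · exact h'
  · exact absurd h.symm (ne_of_lt (rk_lt_rk hy h'))

lemma rk_elt (S : Finset (Fin n)) (l : ℕ) (h : l < S.card) : rk S (elt S l h) = l := by
  classical
  have helt : elt S l h = S.orderEmbOfFin rfl ⟨l, h⟩ :=
    Finset.coe_orderIsoOfFin_apply S rfl ⟨l, h⟩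
  have key : S.filter (fun y => y < elt S l h) =
      (Finset.univ.filter (fun m : Fin S.card => m < (⟨l, h⟩ : Fin S.card))).image
        (fun m => (S.orderEmbOfFin rfl m : Fin n)) := by
    ext y
    simp only [Finset.mem_filter, Finset.mem_image, Finset.mem_univ, true_and]
    constructor
    · rintro ⟨hyS, hylt⟩
      obtain ⟨m, hm⟩ : ∃ m, S.orderEmbOfFin rfl m = y := by
        have : y ∈ Set.range (S.orderEmbOfFin rfl) := by
          rw [Finset.range_orderEmbOfFin]; exact hyS
        exact this
      refine ⟨m, ?_, hm⟩
      rw [← (S.orderEmbOfFin rfl).lt_iff_lt, hm, ← helt]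
      exact hylt
    · rintro ⟨m, hml, rfl⟩
      refine ⟨Finset.orderEmbOfFin_mem S rfl m, ?_⟩
      rw [helt]
      exact (S.orderEmbOfFin rfl).lt_iff_lt.2 hml
  unfold rk
  rw [key, Finset.card_image_of_injective _ (S.orderEmbOfFin rfl).injective]
  have : (Finset.univ.filter (fun m : Fin S.card => m < (⟨l, h⟩ : Fin S.card)))
      = Finset.Iio (⟨l, h⟩ : Fin S.card) := by ext m; simp
  rw [this, Fin.card_Iio]

lemma sum_elt (S : Finset (Fin n)) (f : Fin n → ℝ) :
    ∑ l : Fin S.card, f (elt S (l : ℕ) l.isLt) = ∑ x ∈ S, f x := by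
  rw [← Finset.sum_coe_sort S f]
  exact Fintype.sum_equiv (S.orderIsoOfFin rfl).toEquiv _ _ (fun l => rfl)

end Aux
section Aux2

variable {n k : ℕ} {I J : Finset (Fin n)}

lemma compl_card (hdisj : Disjoint I J) (hcard : I.card + J.card = k) :
    ((I ∪ J)ᶜ : Finset (Fin n)).card = n - k := by
  rw [Finset.card_compl, Finset.card_union_of_disjoint hdisj, hcard, Fintype.card_fin]

lemma tgt_lt_n (hdisj : Disjoint I J) (hcard : I.card + J.card = k) (hkn : k ≤ n)
    (x : Fin n) : tgt k I J x < n := by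
  unfold tgt
  split_ifs with hI hJ
  · have := rk_lt_card hI; omega
  · have := rk_lt_card hJ; omega
  · have hx : x ∈ (I ∪ J)ᶜ := by simp [Finset.mem_compl, Finset.mem_union, hI, hJ]
    have h1 := rk_lt_card hx
    have h2 := compl_card hdisj hcard
    omega

lemma wIJ_apply_J (hdisj : Disjoint I J) (hcard : I.card + J.card = k)
    {m : ℕ} (hm : m < J.card) (hmn : m < n) (v : Fin n → ℝ) :
    wIJ k I J v ⟨m, hmn⟩ = v (elt J m hm) := by
  unfold wIJ
  have hJm : elt J m hm ∈ J := elt_mem J m hm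
  have hIm : elt J m hm ∉ I := fun h => (Finset.disjoint_left.1 hdisj h) hJm
  rw [Finset.sum_eq_single (elt J m hm)]
  · have htgt : tgt k I J (elt J m hm) = m := by
      unfold tgt
      rw [if_neg hIm, if_pos hJm, rk_elt]
    rw [if_pos htgt]
    unfold sgn
    rw [if_neg hIm, one_mul]
  · intro x _ hx
    rw [if_neg]
    intro htgt
    have hval : (((⟨m, hmn⟩ : Fin n)) : ℕ) = m := rfl
    rw [hval] at htgt
    unfold tgt at htgt
    split_ifs at htgt with hI hJ
    · have := rk_lt_card hI; omega
    · exact hx (rk_inj hJ hJm (by rw [htgt, rk_elt]))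
    · omega
  · intro h; exact absurd (Finset.mem_univ _) h

lemma sum_wIJ (hdisj : Disjoint I J) (hcard : I.card + J.card = k) (hkn : k ≤ n)
    (v : Fin n → ℝ) :
    ∑ m ∈ Finset.univ.filter (fun m : Fin n => (m : ℕ) < k), wIJ k I J v m
      = ∑ x ∈ J, v x - ∑ x ∈ I, v x := by
  unfold wIJ
  rw [Finset.sum_comm]
  have step : ∀ x : Fin n,
      (∑ m ∈ Finset.univ.filter (fun m : Fin n => (m : ℕ) < k),
        if tgt k I J x = (m : ℕ) then sgn I x * v x else 0)
      = if x ∈ I ∪ J then sgn I x * v x else 0 := by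
    intro x
    have hlt := tgt_lt_n hdisj hcard hkn x
    have hcond : ∀ m : Fin n, (tgt k I J x = (m : ℕ)) = ((⟨tgt k I J x, hlt⟩ : Fin n) = m) := by
      intro m
      simp [Fin.ext_iff]
    simp only [hcond]
    rw [Finset.sum_ite_eq]
    simp only [Finset.mem_filter, Finset.mem_univ, true_and]
    have hiff : tgt k I J x < k ↔ x ∈ I ∪ J := by
      unfold tgt
      rw [Finset.mem_union]
      split_ifs with hI hJ
      · have := rk_lt_card hI
        simp only [hI, true_or, iff_true]
        omega
      · have := rk_lt_card hJ
        simp only [hJ, or_true, iff_true]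
        omega
      · simp only [hI, hJ, or_self, iff_false]
        omega
    by_cases hc : tgt k I J x < k
    · rw [if_pos hc, if_pos (hiff.1 hc)]
    · rw [if_neg hc, if_neg (fun hm => hc (hiff.2 hm))]
  rw [Finset.sum_congr rfl (fun x _ => step x)]
  rw [Finset.sum_ite_mem, Finset.univ_inter, Finset.sum_union hdisj]
  have hIs : ∀ x ∈ I, sgn I x * v x = -v x := by
    intro x hx; unfold sgn; rw [if_pos hx]; ring
  have hJs : ∀ x ∈ J, sgn I x * v x = v x := by
    intro x hx
    unfold sgn
    rw [if_neg (fun h => (Finset.disjoint_left.1 hdisj h) hx), one_mul]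
  rw [Finset.sum_congr rfl hIs, Finset.sum_congr rfl hJs, Finset.sum_neg_distrib]
  ring

end Aux2
section Aux3

variable {n k : ℕ} {I J : Finset (Fin n)}

lemma gauss_sum (k : ℕ) : (∑ i ∈ Finset.range k, (i : ℝ)) = (k : ℝ) * ((k : ℝ) - 1) / 2 := by
  induction k with
  | zero => simp
  | succ m ih =>
    rw [Finset.sum_range_succ, ih]
    push_cast
    ring

lemma tIJ_eq (lam : Fin n → ℤ) :
    tIJ lam I J = (∑ x ∈ I, ((lam x : ℝ) - ((x : ℕ) + 1)))
      - (∑ x ∈ J, ((lam x : ℝ) - ((x : ℕ) + 1)))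
      + ((I.card : ℝ) - (J.card : ℝ)) * ((n : ℝ) + 1 / 2) := by
  unfold tIJ
  rw [← sum_elt I (fun x => (lam x : ℝ) - ((x : ℕ) + 1)),
      ← sum_elt J (fun x => (lam x : ℝ) - ((x : ℕ) + 1))]

lemma sum_rho_lt (hkn : k ≤ n) :
    ∑ m ∈ Finset.univ.filter (fun m : Fin n => (m : ℕ) < k), rho n m
      = (k : ℝ) * n - (k : ℝ) ^ 2 / 2 := by
  have hset : Finset.univ.filter (fun m : Fin n => (m : ℕ) < k)
      = Finset.map (Fin.castLEEmb hkn) Finset.univ := by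
    ext m
    simp only [Finset.mem_filter, Finset.mem_univ, true_and, Finset.mem_map]
    constructor
    · intro h; exact ⟨⟨(m : ℕ), h⟩, Fin.ext rfl⟩
    · rintro ⟨a, rfl⟩; exact a.isLt
  rw [hset, Finset.sum_map]
  have h1 : ∀ j : Fin k, rho n (Fin.castLEEmb hkn j) = (n : ℝ) - ((j : ℕ) + 1) + 1 / 2 := by
    intro j; rfl
  rw [Finset.sum_congr rfl (fun j _ => h1 j)]
  rw [Fin.sum_univ_eq_sum_range (fun i => (n : ℝ) - ((i : ℕ) + 1) + 1 / 2)]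
  have h2 : ∀ i ∈ Finset.range k, (n : ℝ) - ((i : ℕ) + 1) + 1 / 2 = ((n : ℝ) - 1 / 2) - i :=
    fun _ _ => by ring
  rw [Finset.sum_congr rfl h2, Finset.sum_sub_distrib, Finset.sum_const, Finset.card_range,
    gauss_sum, nsmul_eq_mul]
  ring

lemma cIJ_mul_k (hdisj : Disjoint I J) (hcard : I.card + J.card = k) (hkn : k ≤ n)
    (hk1 : 1 ≤ k) (lam : Fin n → ℤ) :
    cIJ k lam I J * k = - tIJ lam I J - ((k : ℝ) * n - (k : ℝ) ^ 2 / 2) := by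
  have hk0 : (k : ℝ) ≠ 0 := by positivity
  unfold cIJ
  rw [div_mul_cancel₀ _ hk0]
  rw [Finset.sum_sub_distrib, sum_wIJ hdisj hcard hkn, sum_rho_lt hkn, tIJ_eq lam]
  have hlr : ∀ x : Fin n, lamRho n lam x = ((lam x : ℝ) - ((x : ℕ) + 1)) + ((n : ℝ) + 1 / 2) := by
    intro x; unfold lamRho rho; ring
  rw [Finset.sum_congr rfl (fun x _ => hlr x), Finset.sum_congr rfl (fun x (_ : x ∈ I) => hlr x)]
  simp only [Finset.sum_add_distrib, Finset.sum_const, nsmul_eq_mul]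
  ring

end Aux3
section Aux4

variable {n k : ℕ} {I J : Finset (Fin n)}

lemma muIJ_eval (hdisj : Disjoint I J) (hcard : I.card + J.card = k)
    (lam : Fin n → ℤ) {m : Fin n} (hm : (m : ℕ) < J.card) (hmk : (m : ℕ) < k) :
    muIJ k lam I J m = lamRho n lam (elt J (m : ℕ) hm) - rho n m - cIJ k lam I J := by
  unfold muIJ
  have h1 : wIJ k I J (lamRho n lam) m = lamRho n lam (elt J (m : ℕ) hm) := by
    have := wIJ_apply_J hdisj hcard hm m.isLt (lamRho n lam)
    rwa [show (⟨(m : ℕ), m.isLt⟩ : Fin n) = m from rfl] at this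
  rw [h1]
  have h2 : ((∑ i ∈ Finset.univ.filter (fun i : Fin n => (i : ℕ) < k), eps n i)) m = 1 := by
    rw [Finset.sum_apply]
    unfold eps
    rw [Finset.sum_ite_eq]
    rw [if_pos (by simp [hmk])]
  rw [h2, mul_one]

end Aux4

/-- a self-dual pair with `t_{(I,J)} ≥ 0` has `|I| ≥ |J|`. -/
theorem selfDual_nonneg_t_implies_card_ge
    (n k : ℕ) (hn : 3 ≤ n) (hk1 : 1 ≤ k) (hkn : k ≤ n)
    (lam : Fin n → ℤ) (hdom : ∀ i j : Fin n, i ≤ j → lam j ≤ lam i) (hnn : ∀ i, 0 ≤ lam i)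
    (I J : Finset (Fin n)) (hdisj : Disjoint I J) (hcard : I.card + J.card = k)
    (hsd : SelfDual k lam I J) (ht : 0 ≤ tIJ lam I J) :
    J.card ≤ I.card := by
  by_contra hcon
  push_neg at hcon
  have h1 : I.card + 1 - 1 < n := by omega
  have h2 : k - (I.card + 1) < n := by omega
  have hsd' := hsd (I.card + 1) (by omega) (by omega) h1 h2
  have hm1 : ((⟨I.card + 1 - 1, h1⟩ : Fin n) : ℕ) < J.card := by
    simp only [Fin.val_mk]; omega
  have hm1k : ((⟨I.card + 1 - 1, h1⟩ : Fin n) : ℕ) < k := by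
    simp only [Fin.val_mk]; omega
  have hm2 : ((⟨k - (I.card + 1), h2⟩ : Fin n) : ℕ) < J.card := by
    simp only [Fin.val_mk]; omega
  have hm2k : ((⟨k - (I.card + 1), h2⟩ : Fin n) : ℕ) < k := by
    simp only [Fin.val_mk]; omega
  rw [muIJ_eval hdisj hcard lam hm1 hm1k, muIJ_eval hdisj hcard lam hm2 hm2k] at hsd'
  set A := lamRho n lam (elt J _ hm1) with hA
  set B := lamRho n lam (elt J _ hm2) with hB
  set c := cIJ k lam I J with hc
  -- positivity of lamRho
  have hpos : ∀ x : Fin n, 0 < lamRho n lam x := by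
    intro x
    have hx1 : (0 : ℝ) ≤ (lam x : ℝ) := by exact_mod_cast hnn x
    have hx2 : ((x : ℕ) : ℝ) + 1 ≤ (n : ℝ) := by exact_mod_cast x.isLt
    unfold lamRho rho
    linarith
  have hApos : 0 < A := hpos _
  have hBpos : 0 < B := hpos _
  -- rho values
  have hrho1 : rho n (⟨I.card + 1 - 1, h1⟩ : Fin n) = (n : ℝ) - ((I.card : ℝ) + 1) + 1 / 2 := by
    unfold rho
    simp only [Fin.val_mk]
    rw [show I.card + 1 - 1 = I.card from rfl]
  have hrho2 : rho n (⟨k - (I.card + 1), h2⟩ : Fin n) = (n : ℝ) - ((J.card : ℝ) - 1 + 1) + 1 / 2 := by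
    unfold rho
    simp only [Fin.val_mk]
    rw [show k - (I.card + 1) = J.card - 1 from by omega]
    rw [Nat.cast_sub (by omega : 1 ≤ J.card)]
    norm_num
  rw [hrho1, hrho2] at hsd'
  -- arithmetic
  have hck := cIJ_mul_k hdisj hcard hkn hk1 lam
  rw [← hc] at hck
  have hcast : (I.card : ℝ) + (J.card : ℝ) = (k : ℝ) := by exact_mod_cast hcard
  have hkR : (1 : ℝ) ≤ (k : ℝ) := by exact_mod_cast hk1
  have hAB : A + B = 2 * (n : ℝ) - (k : ℝ) + 2 * c := by linarith
  have key : (A + B) * (k : ℝ) = -2 * tIJ lam I J := by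
    linear_combination (k : ℝ) * hAB + 2 * hck
  nlinarith [mul_pos (show (0:ℝ) < A + B by linarith) (show (0:ℝ) < (k:ℝ) by linarith)]

end
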